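/- Let α ∈ (0,1) and R > 0, and let F''(q) = −(2+α) q (1+q²)^{−(4+α)/2} denote the second derivative of F(q) = ∫_0^q (1+τ²)^{−(2+α)/2} dτ. Then the integral γ := −2R ∫_ℝ (1 + cos t) F''(2R/|t|) |t|^{−3−α} dt converges absolutely, γ > 0, and for every s ∈ ℝ, −2R ∫_ℝ ( cos s + cos(s−t) ) F''(2R/|t|) |t|^{−3−α} dt = γ cos s. -/
import Mathlib


open MeasureTheory Filter Topology Real
open Set

/-- `F''(q) = −(2+α) q (1+q²)^{−(4+α)/2}`, the second derivative of
`F(q) = ∫_0^q (1+τ²)^{−(2+α)/2} dτ`. -/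
noncomputable def Fsecond (α q : ℝ) : ℝ := -(2 + α) * q * (1 + q ^ 2) ^ (-(4 + α) / 2)

lemma Fsecond_abs (α : ℝ) (hα : 0 < α) {q : ℝ} (hq : 0 ≤ q) :
    |Fsecond α q| = (2 + α) * q * (1 + q ^ 2) ^ (-(4 + α) / 2) := by
  have h1 : (0:ℝ) < 1 + q ^ 2 := by positivity
  have heq : Fsecond α q = -((2 + α) * q * (1 + q ^ 2) ^ (-(4 + α) / 2)) := by
    rw [Fsecond]; ring
  rw [heq, abs_neg, abs_of_nonneg]
  exact mul_nonneg (mul_nonneg (by linarith) hq) (Real.rpow_nonneg h1.le _)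

lemma Fsecond_bound1 (α : ℝ) (hα : 0 < α) {q : ℝ} (hq : 0 < q) :
    |Fsecond α q| ≤ (2 + α) * q ^ (-(3 + α)) := by
  rw [Fsecond_abs α hα hq.le]
  have h1 : (1 + q ^ 2 : ℝ) ^ (-(4 + α) / 2) ≤ (q ^ 2 : ℝ) ^ (-(4 + α) / 2) :=
    Real.rpow_le_rpow_of_nonpos (by positivity) (by linarith) (by linarith)
  have h2 : (q ^ 2 : ℝ) ^ (-(4 + α) / 2) = q ^ (-(4 + α)) := by
    rw [← Real.rpow_natCast q 2, ← Real.rpow_mul hq.le]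
    norm_num
    congr 1; ring
  have h3 : q * q ^ (-(4 + α)) = q ^ (-(3 + α)) := by
    nth_rewrite 1 [← Real.rpow_one q]
    rw [← Real.rpow_add hq]
    congr 1; ring
  calc (2 + α) * q * (1 + q ^ 2) ^ (-(4 + α) / 2)
      ≤ (2 + α) * q * (q ^ (-(4 + α))) := by
        rw [← h2] at *
        exact mul_le_mul_of_nonneg_left h1 (by positivity)
    _ = (2 + α) * q ^ (-(3 + α)) := by rw [mul_assoc, h3]

lemma Fsecond_bound2 (α : ℝ) (hα : 0 < α) {q : ℝ} (hq : 0 ≤ q) :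
    |Fsecond α q| ≤ (2 + α) * q := by
  rw [Fsecond_abs α hα hq]
  have h1 : (1 + q ^ 2 : ℝ) ^ (-(4 + α) / 2) ≤ 1 :=
    Real.rpow_le_one_of_one_le_of_nonpos (by nlinarith [sq_nonneg q]) (by linarith)
  calc (2 + α) * q * (1 + q ^ 2) ^ (-(4 + α) / 2) ≤ (2 + α) * q * 1 :=
        mul_le_mul_of_nonneg_left h1 (by positivity)
    _ = (2 + α) * q := by ring

lemma Fsecond_neg (α : ℝ) (hα : 0 < α) {q : ℝ} (hq : 0 < q) : Fsecond α q < 0 := by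
  have h1 : (0:ℝ) < 1 + q ^ 2 := by positivity
  have := Real.rpow_pos_of_pos h1 (-(4 + α) / 2)
  rw [Fsecond]
  have h2 : 0 < (2 + α) * q := by positivity
  nlinarith

lemma Fsecond_nonpos (α : ℝ) (hα : 0 < α) {q : ℝ} (hq : 0 ≤ q) : Fsecond α q ≤ 0 := by
  rcases hq.eq_or_lt with h | h
  · simp [Fsecond, ← h]
  · exact (Fsecond_neg α hα h).le

noncomputable def gfun (α R : ℝ) (t : ℝ) : ℝ := Fsecond α (2 * R / |t|) * |t| ^ (-(3 + α))

lemma gfun_even (α R t : ℝ) : gfun α R (-t) = gfun α R t := by simp [gfun]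

lemma gfun_measurable (α R : ℝ) : Measurable (gfun α R) := by
  unfold gfun Fsecond; fun_prop

lemma gfun_boundA (α R : ℝ) (hα : 0 < α) (hR : 0 < R) (t : ℝ) :
    |gfun α R t| ≤ (2 + α) * (2 * R) ^ (-(3 + α)) := by
  have h2R : (0:ℝ) < 2 * R := by linarith
  rcases eq_or_ne t 0 with rfl | ht
  · simp [gfun, Fsecond]
    positivity
  · have hat : 0 < |t| := abs_pos.mpr ht
    have hq : 0 < 2 * R / |t| := by positivity
    rw [gfun, abs_mul, abs_of_nonneg (Real.rpow_nonneg hat.le _)]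
    calc |Fsecond α (2 * R / |t|)| * |t| ^ (-(3 + α))
        ≤ (2 + α) * (2 * R / |t|) ^ (-(3 + α)) * |t| ^ (-(3 + α)) :=
          mul_le_mul_of_nonneg_right (Fsecond_bound1 α hα hq) (Real.rpow_nonneg hat.le _)
      _ = (2 + α) * (2 * R) ^ (-(3 + α)) := by
          rw [mul_assoc, ← Real.mul_rpow hq.le hat.le, div_mul_cancel₀ _ hat.ne']

lemma gfun_boundB (α R : ℝ) (hα : 0 < α) (hR : 0 < R) {t : ℝ} (ht : t ≠ 0) :
    |gfun α R t| ≤ (2 + α) * (2 * R) * |t| ^ (-(4 + α)) := by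
  have h2R : (0:ℝ) < 2 * R := by linarith
  have hat : 0 < |t| := abs_pos.mpr ht
  have hq : 0 ≤ 2 * R / |t| := by positivity
  rw [gfun, abs_mul, abs_of_nonneg (Real.rpow_nonneg hat.le _)]
  calc |Fsecond α (2 * R / |t|)| * |t| ^ (-(3 + α))
      ≤ (2 + α) * (2 * R / |t|) * |t| ^ (-(3 + α)) :=
        mul_le_mul_of_nonneg_right (Fsecond_bound2 α hα hq) (Real.rpow_nonneg hat.le _)
    _ = (2 + α) * (2 * R) * (|t| ^ (-1 : ℝ) * |t| ^ (-(3 + α))) := by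
        rw [Real.rpow_neg_one]; ring
    _ = (2 + α) * (2 * R) * |t| ^ (-(4 + α)) := by
        rw [← Real.rpow_add hat]; congr 1; ring

lemma gfun_integrable (α R : ℝ) (hα : 0 < α) (hR : 0 < R) : Integrable (gfun α R) := by
  have hmeas := gfun_measurable α R
  have hIoi : IntegrableOn (gfun α R) (Ioi 1) := by
    have hbase : IntegrableOn (fun t : ℝ => t ^ (-(4 + α))) (Ioi 1) :=
      integrableOn_Ioi_rpow_of_lt (by linarith) one_pos
    refine Integrable.mono' (hbase.const_mul ((2 + α) * (2 * R))) hmeas.aestronglyMeasurable.restrict ?_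
    rw [ae_restrict_iff' measurableSet_Ioi]
    filter_upwards with t ht
    have ht1 : (1:ℝ) < t := ht
    have ht0 : t ≠ 0 := by linarith
    rw [Real.norm_eq_abs]
    calc |gfun α R t| ≤ (2 + α) * (2 * R) * |t| ^ (-(4 + α)) := gfun_boundB α R hα hR ht0
      _ = (2 + α) * (2 * R) * t ^ (-(4 + α)) := by rw [abs_of_pos (by linarith)]
  have hIio : IntegrableOn (gfun α R) (Iio (-1)) := by
    have hpre : Neg.neg ⁻¹' (Iio (-1 : ℝ)) = Ioi 1 := by
      ext x; simp [neg_lt]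
    have h2 : (gfun α R ∘ Neg.neg) = gfun α R := by
      funext t; simp [Function.comp, gfun_even]
    refine (MeasurePreserving.integrableOn_comp_preimage
      (Measure.measurePreserving_neg (volume : Measure ℝ))
      (Homeomorph.neg ℝ).measurableEmbedding
      (f := gfun α R) (s := Iio (-1 : ℝ))).mp ?_
    rw [hpre, h2]
    exact hIoi
  have hIcc : IntegrableOn (gfun α R) (Icc (-1) 1) := by
    refine Integrable.mono' (integrable_const ((2 + α) * (2 * R) ^ (-(3 + α))))
      hmeas.aestronglyMeasurable.restrict ?_
    filter_upwards with t
    rw [Real.norm_eq_abs]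
    exact gfun_boundA α R hα hR t
  have hunion : IntegrableOn (gfun α R) (Iio (-1) ∪ (Icc (-1) 1 ∪ Ioi 1)) :=
    hIio.union (hIcc.union hIoi)
  rw [← integrableOn_univ]
  refine hunion.mono_set fun x _ => ?_
  rcases lt_or_ge x (-1) with h | h
  · exact Or.inl h
  · rcases le_or_gt x 1 with h2 | h2
    · exact Or.inr (Or.inl ⟨h, h2⟩)
    · exact Or.inr (Or.inr h2)

lemma gfun_nonpos (α R : ℝ) (hα : 0 < α) (hR : 0 < R) (t : ℝ) : gfun α R t ≤ 0 := by
  have hq : 0 ≤ 2 * R / |t| := by positivity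
  exact mul_nonpos_of_nonpos_of_nonneg (Fsecond_nonpos α hα hq)
    (Real.rpow_nonneg (abs_nonneg t) _)

lemma gfun_neg_of (α R : ℝ) (hα : 0 < α) (hR : 0 < R) {t : ℝ} (ht : t ≠ 0) :
    gfun α R t < 0 := by
  have hat : 0 < |t| := abs_pos.mpr ht
  have hq : 0 < 2 * R / |t| := by positivity
  exact mul_neg_of_neg_of_pos (Fsecond_neg α hα hq) (Real.rpow_pos_of_pos hat _)

/-- **The `λ`-derivative of the linearized operator is a positive multiple of `cos`.**
For `α ∈ (0,1)` and `R > 0`, the integral `γ = −2R ∫_ℝ (1 + cos t) F''(2R/|t|) |t|^{−3−α} dt`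
converges absolutely, `γ > 0`, and for every `s`,
`−2R ∫_ℝ (cos s + cos(s−t)) F''(2R/|t|) |t|^{−3−α} dt = γ cos s`. -/
theorem lambda_derivative_is_gamma_cos
    (α R : ℝ) (hα : α ∈ Set.Ioo (0:ℝ) 1) (hR : 0 < R) :
    Integrable (fun t : ℝ => (1 + Real.cos t) * Fsecond α (2 * R / |t|) * |t| ^ (-(3 + α))) ∧
    0 < -2 * R * ∫ t : ℝ, (1 + Real.cos t) * Fsecond α (2 * R / |t|) * |t| ^ (-(3 + α)) ∧
    ∀ s : ℝ,
      -2 * R * ∫ t : ℝ, (Real.cos s + Real.cos (s - t)) * Fsecond α (2 * R / |t|) * |t| ^ (-(3 + α)) =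
        (-2 * R * ∫ t : ℝ, (1 + Real.cos t) * Fsecond α (2 * R / |t|) * |t| ^ (-(3 + α))) *
          Real.cos s := by
  obtain ⟨hα0, hα1⟩ := hα
  have hg_int := gfun_integrable α R hα0 hR
  have heq : (fun t : ℝ => (1 + Real.cos t) * Fsecond α (2 * R / |t|) * |t| ^ (-(3 + α)))
      = fun t : ℝ => (1 + Real.cos t) * gfun α R t := by
    funext t; rw [gfun, mul_assoc]
  -- integrability of the main integrand
  have hf_meas : AEStronglyMeasurable (fun t : ℝ => (1 + Real.cos t) * gfun α R t) volume :=
    ((continuous_const.add Real.continuous_cos).measurable.mul (gfun_measurable α R)).aestronglyMeasurable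
  have hf_int : Integrable (fun t : ℝ => (1 + Real.cos t) * gfun α R t) := by
    refine Integrable.mono' (hg_int.abs.const_mul 2) hf_meas ?_
    filter_upwards with t
    rw [Real.norm_eq_abs, abs_mul]
    have h1 : |1 + Real.cos t| ≤ 2 := by
      rw [abs_le]; constructor <;> nlinarith [Real.neg_one_le_cos t, Real.cos_le_one t]
    calc |1 + Real.cos t| * |gfun α R t| ≤ 2 * |gfun α R t| :=
      mul_le_mul_of_nonneg_right h1 (abs_nonneg _)
    _ = 2 * |gfun α R t| := rfl
  -- the integral is negative
  have hI_neg : (∫ t : ℝ, (1 + Real.cos t) * gfun α R t) < 0 := by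
    have hpos : 0 < ∫ t : ℝ, -((1 + Real.cos t) * gfun α R t) := by
      rw [MeasureTheory.integral_pos_iff_support_of_nonneg]
      · refine lt_of_lt_of_le ?_ (measure_mono (show Ioo (0:ℝ) 1 ⊆ Function.support _ from ?_))
        · rw [Real.volume_Ioo]; norm_num
        · intro t ht
          have hcos : 0 < Real.cos t := Real.cos_pos_of_mem_Ioo
            ⟨by nlinarith [Real.pi_gt_three, ht.1], by nlinarith [Real.pi_gt_three, ht.2]⟩
          have h1 : 0 < 1 + Real.cos t := by linarith
          have h2 : gfun α R t < 0 := gfun_neg_of α R hα0 hR (ne_of_gt ht.1)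
          have : 0 < -((1 + Real.cos t) * gfun α R t) := by nlinarith
          exact ne_of_gt this
      · intro t
        have h1 : 0 ≤ 1 + Real.cos t := by linarith [Real.neg_one_le_cos t]
        have h2 := gfun_nonpos α R hα0 hR t
        simp only [Pi.zero_apply, neg_nonneg]
        exact mul_nonpos_of_nonneg_of_nonpos h1 h2
      · exact hf_int.neg
    rw [integral_neg] at hpos
    linarith
  refine ⟨by rw [heq]; exact hf_int, by rw [heq]; nlinarith, ?_⟩
  -- the cosine identity
  intro s
  have hu_int : Integrable (fun t : ℝ => Real.sin t * gfun α R t) := by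
    refine Integrable.mono' hg_int.abs
      ((Real.continuous_sin.measurable.mul (gfun_measurable α R)).aestronglyMeasurable) ?_
    filter_upwards with t
    rw [Real.norm_eq_abs, abs_mul]
    calc |Real.sin t| * |gfun α R t| ≤ 1 * |gfun α R t| :=
      mul_le_mul_of_nonneg_right (Real.abs_sin_le_one t) (abs_nonneg _)
    _ = |gfun α R t| := one_mul _
  have hJ : (∫ t : ℝ, Real.sin t * gfun α R t) = 0 := by
    have hodd : (∫ t : ℝ, Real.sin (-t) * gfun α R (-t)) = ∫ t : ℝ, Real.sin t * gfun α R t :=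
      integral_neg_eq_self (fun t : ℝ => Real.sin t * gfun α R t) volume
    have : (∫ t : ℝ, Real.sin (-t) * gfun α R (-t))
        = -∫ t : ℝ, Real.sin t * gfun α R t := by
      rw [← integral_neg]
      congr 1; funext t; rw [Real.sin_neg, gfun_even]; ring
    linarith [hodd, this]
  have heq2 : (fun t : ℝ => (Real.cos s + Real.cos (s - t)) * Fsecond α (2 * R / |t|) * |t| ^ (-(3 + α)))
      = fun t : ℝ => Real.cos s * ((1 + Real.cos t) * gfun α R t)
          + Real.sin s * (Real.sin t * gfun α R t) := by
    funext t
    rw [gfun, Real.cos_sub]; ring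
  rw [heq, heq2, MeasureTheory.integral_add (hf_int.const_mul _) (hu_int.const_mul _),
    integral_const_mul, integral_const_mul, hJ]
  ring
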